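/- Fix a proper coloring of a set I of open/closed unit intervals into ω rows and let x ∈ I. If r_2(x) ≥ (2/3)ω, then the number of intervals other than x intersecting x is at most (7/3)ω - 3, and hence the FirstFit color of x is at most (7/3)ω - 2. -/

import Mathlib

/-- A set of reals is an open or closed unit interval. -/
def IsUnitInterval (s : Set ℝ) : Prop :=
  ∃ r : ℝ, s = Set.Icc r (r + 1) ∨ s = Set.Ioo r (r + 1)

/-- `nbRows f C x k` is the number of rows (color classes of `C`) containing
exactly `k` intervals intersecting `f x` (other than `x` itself). -/
noncomputable def nbRows {ι : Type*} (f : ι → Set ℝ) {ω : ℕ} (C : ι → Fin ω) (x : ι) (k : ℕ) : ℕ :=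
  {ρ : Fin ω | ({j | j ≠ x ∧ C j = ρ ∧ (f j ∩ f x).Nonempty}).ncard = k}.ncard

/-!
The intervals of one row are pairwise disjoint and all meet `f x = [a, a + 1]` (up to endpoints),
so their left endpoints lie in `[a - 1, a + 1]` at mutual distance at least `1`: a row contains at
most three of them, and the row of `x` contains none. Summing over rows, `x` has at most
`3 (ω - 1) - r₂(x) ≤ (7/3) ω - 3` neighbours. FirstFit gives `x` the least positive colour not
used by its earlier neighbours, which is at most one more than the number of neighbours.
-/

open Set
open scoped Function

lemma IsUnitInterval.exists_Ioo_subset_subset_Icc {s : Set ℝ} (hs : IsUnitInterval s) :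
    ∃ a, Ioo a (a + 1) ⊆ s ∧ s ⊆ Icc a (a + 1) := by
  obtain ⟨a, rfl | rfl⟩ := hs
  · exact ⟨a, Ioo_subset_Icc_self, subset_rfl⟩
  · exact ⟨a, subset_rfl, Ioo_subset_Icc_self⟩

lemma inter_nonempty_of_abs_sub_lt_one {s t : Set ℝ} {a b : ℝ} (hs : Ioo a (a + 1) ⊆ s)
    (ht : Ioo b (b + 1) ⊆ t) (hab : |a - b| < 1) : (s ∩ t).Nonempty := by
  rw [abs_sub_lt_iff] at hab
  exact ⟨(a + b + 1) / 2, hs ⟨by linarith, by linarith⟩, ht ⟨by linarith, by linarith⟩⟩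

lemma mem_Icc_of_inter_nonempty {s t : Set ℝ} {a b : ℝ} (hs : s ⊆ Icc a (a + 1))
    (ht : t ⊆ Icc b (b + 1)) (hst : (s ∩ t).Nonempty) : a ∈ Icc (b - 1) (b + 1) := by
  obtain ⟨u, hus, hut⟩ := hst
  obtain ⟨hau, hua⟩ := hs hus
  obtain ⟨hbu, hub⟩ := ht hut
  constructor <;> linarith

lemma encard_le_of_one_le_abs_sub {ι : Type*} {S : Set ι} {g : ι → ℝ} {a : ℝ} (n : ℕ)
    (hg : ∀ i ∈ S, g i ∈ Icc a (a + n)) (hsep : S.Pairwise fun i j => 1 ≤ |g i - g j|) :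
    S.encard ≤ n + 1 := by
  have hmaps : MapsTo (fun i => ⌈g i - a⌉₊) S (Finset.range (n + 1) : Set ℕ) := by
    intro i hi
    simp only [Finset.coe_range, mem_Iio, Nat.lt_succ_iff, Nat.ceil_le]
    linarith [(hg i hi).2]
  have hinj : InjOn (fun i => ⌈g i - a⌉₊) S := by
    intro i hi j hj hij
    by_contra hne
    have h1 := Nat.le_ceil (g i - a)
    have h2 := Nat.ceil_lt_add_one (sub_nonneg.2 (hg i hi).1)
    have h3 := Nat.le_ceil (g j - a)
    have h4 := Nat.ceil_lt_add_one (sub_nonneg.2 (hg j hj).1)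
    simp only at hij
    rw [hij] at h1 h2
    exact (hsep hi hj hne).not_gt (abs_sub_lt_iff.2 ⟨by linarith, by linarith⟩)
  calc S.encard ≤ (Finset.range (n + 1) : Set ℕ).encard := encard_le_encard_of_injOn hmaps hinj
    _ = n + 1 := by rw [encard_coe_eq_coe_finsetCard]; simp

lemma encard_le_three_of_pairwise_disjoint {ι : Type*} {f : ι → Set ℝ} {s : Set ℝ} {S : Set ι}
    (hf : ∀ i, IsUnitInterval (f i)) (hs : IsUnitInterval s)
    (hdisj : S.Pairwise (Disjoint on f)) (hmeet : ∀ i ∈ S, (f i ∩ s).Nonempty) :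
    S.encard ≤ 3 := by
  choose L hLo hLc using fun i => (hf i).exists_Ioo_subset_subset_Icc
  obtain ⟨a, -, hac⟩ := hs.exists_Ioo_subset_subset_Icc
  have hrange : ∀ i ∈ S, L i ∈ Icc (a - 1) (a - 1 + (2 : ℕ)) := fun i hi => by
    convert mem_Icc_of_inter_nonempty (hLc i) hac (hmeet i hi) using 2
    push_cast; ring
  have hsep : S.Pairwise fun i j => 1 ≤ |L i - L j| := fun i hi j hj hij => by
    by_contra! hlt
    exact not_disjoint_iff_nonempty_inter.2
      (inter_nonempty_of_abs_sub_lt_one (hLo i) (hLo j) hlt) (hdisj hi hj hij)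
  exact (encard_le_of_one_le_abs_sub 2 hrange hsep).trans_eq (by norm_num)

lemma sum_add_ncard_eq_two_add_three_le {α : Type*} [Fintype α] (m : α → ℕ) (a : α)
    (hm : ∀ i, m i ≤ 3) (ha : m a = 0) :
    ∑ i, m i + {i | m i = 2}.ncard + 3 ≤ 3 * Fintype.card α := by
  classical
  have hpoint : ∀ i, m i + (if m i = 2 then 1 else 0) + (if i = a then 3 else 0) ≤ 3 := by
    intro i
    by_cases hi : i = a
    · subst hi; simp [ha]
    · have := hm i
      split_ifs <;> omega
  have hsum := Finset.sum_le_sum fun i (_ : i ∈ Finset.univ) => hpoint i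
  simp only [Finset.sum_add_distrib, Finset.sum_ite_eq', Finset.mem_univ, if_true,
    ← Finset.card_filter, Finset.sum_const, Finset.card_univ, smul_eq_mul] at hsum
  rw [ncard_eq_toFinset_card', toFinset_ofPred]
  omega

lemma exists_mem_Icc_forall_ne_of_finite {ι : Type*} {P : Set ι} (hP : P.Finite) (c : ι → ℕ) :
    ∃ n ∈ Icc 1 (P.ncard + 1), ∀ j ∈ P, c j ≠ n := by
  have hlt : (c '' P).ncard < (Finset.Icc 1 (P.ncard + 1) : Set ℕ).ncard := by
    rw [ncard_coe_finset, Nat.card_Icc]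
    exact (ncard_image_le hP).trans_lt (by omega)
  obtain ⟨n, hn, hnP⟩ := exists_mem_notMem_of_ncard_lt_ncard hlt (hP.image c)
  exact ⟨n, by simpa using hn, fun j hj hcj => hnP ⟨j, hj, hcj⟩⟩

lemma firstFit_le_ncard_add_one {ι α : Type*} {f : ι → Set α} {ord c : ι → ℕ} {x : ι}
    (hcx : c x = sInf {n : ℕ | 1 ≤ n ∧
      ∀ j, j ≠ x → (f x ∩ f j).Nonempty → ord j < ord x → c j ≠ n})
    (hfin : {j | j ≠ x ∧ (f j ∩ f x).Nonempty}.Finite) :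
    c x ≤ {j | j ≠ x ∧ (f j ∩ f x).Nonempty}.ncard + 1 := by
  obtain ⟨n, hn, hnc⟩ := exists_mem_Icc_forall_ne_of_finite hfin c
  calc c x ≤ n :=
        hcx ▸ Nat.sInf_le ⟨hn.1, fun j hjx hjm _ => hnc j ⟨hjx, inter_comm (f x) _ ▸ hjm⟩⟩
    _ ≤ _ := hn.2

theorem stmt16_general {ι : Type*} (f : ι → Set ℝ)
    (hunit : ∀ i, IsUnitInterval (f i)) (ω : ℕ) (C : ι → Fin ω)
    (hC : ∀ i j, i ≠ j → (f i ∩ f j).Nonempty → C i ≠ C j)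
    (ord : ι → ℕ) (c : ι → ℕ)
    (hc : ∀ i, c i = sInf {n : ℕ | 1 ≤ n ∧
      ∀ j, j ≠ i → (f i ∩ f j).Nonempty → ord j < ord i → c j ≠ n})
    (x : ι) (hr : (2 : ℚ) / 3 * ω ≤ (nbRows f C x 2 : ℚ)) :
    {j | j ≠ x ∧ (f j ∩ f x).Nonempty}.Finite ∧
    (({j | j ≠ x ∧ (f j ∩ f x).Nonempty}.ncard : ℚ) ≤ 7 / 3 * ω - 3) ∧
    ((c x : ℚ) ≤ 7 / 3 * ω - 2) := by
  set T : Set ι := {j | j ≠ x ∧ (f j ∩ f x).Nonempty}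
  set row : Fin ω → Set ι := fun ρ => {j | j ≠ x ∧ C j = ρ ∧ (f j ∩ f x).Nonempty}
  have hrow : ∀ ρ, (row ρ).Finite ∧ (row ρ).ncard ≤ 3 := fun ρ => by
    refine encard_le_coe_iff_finite_ncard_le.1 <|
      encard_le_three_of_pairwise_disjoint hunit (hunit x) ?_ fun j hj => hj.2.2
    intro i hi j hj hij
    by_contra hij'
    exact hC i j hij (not_disjoint_iff_nonempty_inter.1 hij') (hi.2.1.trans hj.2.1.symm)
  have hxrow : row (C x) = ∅ :=
    eq_empty_of_forall_notMem fun j ⟨hjx, hjc, hjm⟩ => hC j x hjx hjm hjc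
  have hT : T = ⋃ ρ, row ρ := by
    ext j
    simp [T, row]
  have hTfin : T.Finite := hT ▸ finite_iUnion fun ρ => (hrow ρ).1
  have hcount : T.ncard + nbRows f C x 2 + 3 ≤ 3 * ω := by
    have hsum : T.ncard ≤ ∑ ρ, (row ρ).ncard := hT ▸ ncard_iUnion_le_of_fintype row
    have hrows := sum_add_ncard_eq_two_add_three_le (fun ρ => (row ρ).ncard) (C x)
      (fun ρ => (hrow ρ).2) (by simp only [hxrow, ncard_empty])
    simp only [Fintype.card_fin] at hrows
    have hnb : nbRows f C x 2 = {ρ | (row ρ).ncard = 2}.ncard := rfl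
    omega
  have hN : (T.ncard : ℚ) ≤ 7 / 3 * ω - 3 := by
    have : (T.ncard : ℚ) + nbRows f C x 2 + 3 ≤ 3 * ω := by exact_mod_cast hcount
    linarith
  have hcx : (c x : ℚ) ≤ T.ncard + 1 := by exact_mod_cast firstFit_le_ncard_add_one (hc x) hTfin
  exact ⟨hTfin, hN, by linarith⟩

/-- If `r₂(x) ≥ (2/3)ω` then `x` intersects at most `(7/3)ω - 3` other
intervals, and hence the FirstFit color of `x` is at most `(7/3)ω - 2`. -/
theorem stmt16 {ι : Type*} (f : ι → Set ℝ)
    (hunit : ∀ i, IsUnitInterval (f i)) (ω : ℕ) (C : ι → Fin ω)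
    (hC : ∀ i j, i ≠ j → (f i ∩ f j).Nonempty → C i ≠ C j)
    (ord : ι → ℕ) (hord : Function.Injective ord) (c : ι → ℕ)
    (hc : ∀ i, c i = sInf {n : ℕ | 1 ≤ n ∧
      ∀ j, j ≠ i → (f i ∩ f j).Nonempty → ord j < ord i → c j ≠ n})
    (x : ι) (hr : (2 : ℚ) / 3 * ω ≤ (nbRows f C x 2 : ℚ)) :
    {j | j ≠ x ∧ (f j ∩ f x).Nonempty}.Finite ∧
    (({j | j ≠ x ∧ (f j ∩ f x).Nonempty}.ncard : ℚ) ≤ 7 / 3 * ω - 3) ∧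
    ((c x : ℚ) ≤ 7 / 3 * ω - 2) :=
  stmt16_general f hunit ω C hC ord c hc x hr
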